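/- Let B be an alternating bilinear form on the finite 𝔽₂-vector space V with dim V = 2g, let Q denote the set of quadratic refinements of B, let Z : V → ℂ be any function, and for q ∈ Q set D(q) = ∑_{x ∈ V} (−1)^{q(x)} Z(x) and Arf(q) = 2^{−g} ∑_{x ∈ V} (−1)^{q(x)}. Then ∑_{x ∈ V} Z(x) = 2^{−g} ∑_{q ∈ Q} Arf(q) · D(q). (This is the algebraic core of the higher-genus bosonization formula Z = ±2^{−g} ∑_η Arf(η) det K_η.) -/

import Mathlib

/-! The refinements of `B` form a torsor under the dual space `Dual (ZMod 2) V`: two refinements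
differ by an additive, hence `𝔽₂`-linear, map. The torsor is nonempty because `x ↦ C x x` refines
`B` when `C` is the strictly upper triangular half of `B` in a basis, so there are
`|V| = 2 ^ (2 * g)` refinements. For `x ≠ y`, translating by a functional `ℓ` with `ℓ (x - y) = 1`
flips the sign of `(-1) ^ (q x + q y)`, whence `∑ q, (-1) ^ (q x + q y) = 2 ^ (2 * g) * δ x y`.
Expanding `Arf q * D q` as a double sum over `x` and `y` then gives the formula. -/

open scoped Classical

open Module

theorem ZMod.neg_one_pow_val_add {R : Type*} [Ring R] (a b : ZMod 2) :
    (-1 : R) ^ (a + b).val = (-1) ^ a.val * (-1) ^ b.val := by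
  rw [ZMod.val_add, ← neg_one_pow_eq_pow_mod_two, pow_add]

theorem ZMod.neg_one_pow_val_mul_self {R : Type*} [Ring R] (a : ZMod 2) :
    (-1 : R) ^ a.val * (-1) ^ a.val = 1 := by
  rw [← ZMod.neg_one_pow_val_add, CharTwo.add_self_eq_zero, ZMod.val_zero, pow_zero]

namespace LinearMap.BilinForm

variable {R M ι : Type*} [CommRing R] [AddCommGroup M] [Module R M] [Fintype ι] [LinearOrder ι]

theorem exists_add_flip_eq (b : Basis ι R M) {B : LinearMap.BilinForm R M}
    (hsymm : LinearMap.IsSymm B) (halt : LinearMap.IsAlt B) :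
    ∃ C : LinearMap.BilinForm R M, C + C.flip = B := by
  refine ⟨Matrix.toLinearMap₂ b b (.of fun i j => if i < j then B (b i) (b j) else 0),
    ext_basis b fun i j => ?_⟩
  simp only [add_apply, flip_apply, Matrix.toLinearMap₂_apply_basis, Matrix.of_apply]
  rcases lt_trichotomy i j with h | rfl | h
  · simp [h, h.not_gt]
  · simp [halt.self_eq_zero]
  · simpa [h, h.not_gt] using hsymm.eq (b j) (b i)

end LinearMap.BilinForm

section QuadRefinement

variable {V : Type*} [AddCommGroup V] [Module (ZMod 2) V]

abbrev QuadRefinement (B : V →ₗ[ZMod 2] V →ₗ[ZMod 2] ZMod 2) : Type _ :=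
  {q : V → ZMod 2 // ∀ x y, q (x + y) = q x + q y + B x y}

namespace QuadRefinement

variable {B : V →ₗ[ZMod 2] V →ₗ[ZMod 2] ZMod 2}

theorem nonempty_of_isAlt [Module.Finite (ZMod 2) V] (hB : B.IsAlt) :
    Nonempty (QuadRefinement B) := by
  have hsymm : B.IsSymm := ⟨fun x y => by simpa [ZMod.neg_eq_self_mod_two] using hB.neg x y⟩
  obtain ⟨C, hC⟩ := LinearMap.BilinForm.exists_add_flip_eq (finBasis (ZMod 2) V) hsymm hB
  refine ⟨⟨fun x => C x x, fun x y => ?_⟩⟩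
  rw [← hC]
  simp only [map_add, LinearMap.add_apply, LinearMap.BilinForm.flip_apply]
  ring

instance : AddAction (Dual (ZMod 2) V) (QuadRefinement B) where
  vadd ℓ q := ⟨ℓ + q.1, fun x y => by simp only [Pi.add_apply, q.2, map_add]; ring⟩
  zero_vadd q := Subtype.ext (zero_add q.1)
  add_vadd ℓ ℓ' q := Subtype.ext (add_assoc ⇑ℓ ⇑ℓ' q.1)

@[simp]
theorem coe_vadd (ℓ : Dual (ZMod 2) V) (q : QuadRefinement B) : (ℓ +ᵥ q).1 = ℓ + q.1 := rfl

def subDual (q q' : QuadRefinement B) : Dual (ZMod 2) V :=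
  (AddMonoidHom.mk' (q.1 - q'.1) fun x y => by
    simp only [Pi.sub_apply, q.2, q'.2]; ring).toZModLinearMap 2

def equivDual (q₀ : QuadRefinement B) : Dual (ZMod 2) V ≃ QuadRefinement B where
  toFun ℓ := ℓ +ᵥ q₀
  invFun q := q.subDual q₀
  left_inv ℓ := by ext x; simp [subDual]
  right_inv q := by ext x; simp [subDual]

theorem card_eq_card_of_isAlt [Fintype V] (hB : B.IsAlt) :
    Fintype.card (QuadRefinement B) = Fintype.card V := by
  obtain ⟨q₀⟩ := nonempty_of_isAlt hB
  rw [← Nat.card_eq_fintype_card, ← Nat.card_eq_fintype_card, ← Nat.card_congr (equivDual q₀),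
    Nat.card_congr (finBasis (ZMod 2) V).toDualEquiv.toEquiv]

theorem sum_neg_one_pow_mul_neg_one_pow [Fintype V] (x y : V) :
    ∑ q : QuadRefinement B, (-1 : ℂ) ^ (q.1 x).val * (-1) ^ (q.1 y).val
      = if x = y then (Fintype.card (QuadRefinement B) : ℂ) else 0 := by
  split_ifs with hxy
  · simp [hxy, ZMod.neg_one_pow_val_mul_self]
  obtain ⟨ℓ, hℓ⟩ := Projective.exists_dual_eq_one (ZMod 2) (sub_ne_zero.mpr hxy)
  set f : QuadRefinement B → ℂ := fun q => (-1 : ℂ) ^ (q.1 x).val * (-1) ^ (q.1 y).val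
  have hℓ' : ℓ x + ℓ y = 1 := by
    rwa [map_sub, sub_eq_add_neg, ZMod.neg_eq_self_mod_two] at hℓ
  have hsign : (-1 : ℂ) ^ (ℓ x).val * (-1) ^ (ℓ y).val = -1 := by
    rw [← ZMod.neg_one_pow_val_add, hℓ', ZMod.val_one, pow_one]
  have hflip : ∀ q, f (ℓ +ᵥ q) = -f q := fun q => by
    simp only [f, coe_vadd, Pi.add_apply, ZMod.neg_one_pow_val_add]
    linear_combination (-1 : ℂ) ^ (q.1 x).val * (-1) ^ (q.1 y).val * hsign
  have hneg : ∑ q, f q = -∑ q, f q := by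
    rw [← Finset.sum_neg_distrib]
    exact Fintype.sum_equiv (AddAction.toPerm ℓ) _ _ fun q => by simp [hflip]
  exact CharZero.eq_neg_self_iff.mp hneg

end QuadRefinement

end QuadRefinement

/-- **Algebraic core of higher-genus bosonization.**
Let `B` be an alternating bilinear form on a finite `𝔽₂`-vector space `V` with
`dim V = 2g`, `Q` the set of quadratic refinements of `B`, and `Z : V → ℂ`. With
`D q = ∑ x, (-1)^(q x) * Z x` and `Arf q = 2^(-g) * ∑ x, (-1)^(q x)`, one has
`∑ x, Z x = 2^(-g) * ∑ q, Arf q * D q`. -/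
theorem bosonization_formula {V : Type*} [AddCommGroup V] [Module (ZMod 2) V]
    [Fintype V] (g : ℕ) (hdim : Module.finrank (ZMod 2) V = 2 * g)
    (B : V →ₗ[ZMod 2] V →ₗ[ZMod 2] ZMod 2)
    (halt : ∀ x : V, B x x = 0) (Z : V → ℂ)
    (D Arf : {q : V → ZMod 2 // ∀ x y, q (x + y) = q x + q y + B x y} → ℂ)
    (hD : ∀ q, D q = ∑ x : V, ((-1 : ℂ) ^ (q.1 x).val) * Z x)
    (hArf : ∀ q, Arf q = ((2 : ℂ) ^ g)⁻¹ * ∑ x : V, ((-1 : ℂ) ^ (q.1 x).val)) :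
    ∑ x : V, Z x = ((2 : ℂ) ^ g)⁻¹ *
      ∑ q : {q : V → ZMod 2 // ∀ x y, q (x + y) = q x + q y + B x y},
        Arf q * D q := by
  have hcard : (Fintype.card (QuadRefinement B) : ℂ) = 2 ^ g * 2 ^ g := by
    rw [QuadRefinement.card_eq_card_of_isAlt halt, card_eq_pow_finrank (K := ZMod 2), ZMod.card,
      hdim]
    push_cast; ring
  have hexpand : ∑ q : QuadRefinement B, Arf q * D q = ((2 : ℂ) ^ g)⁻¹ *
      ∑ y, (∑ x, ∑ q : QuadRefinement B, (-1 : ℂ) ^ (q.1 x).val * (-1) ^ (q.1 y).val) * Z y := by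
    simp only [hArf, hD, Finset.sum_mul, Finset.mul_sum, mul_assoc]
    rw [Finset.sum_comm]
    exact Finset.sum_congr rfl fun _ _ => Finset.sum_comm
  simp only [hexpand, QuadRefinement.sum_neg_one_pow_mul_neg_one_pow, Finset.sum_ite_eq',
    Finset.mem_univ, if_true, hcard]
  rw [← Finset.mul_sum]
  field_simp
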